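/- The smallest eigenvalue of the operator s̄_N on H_h equals ∏_{k=1}^n (1 − (1/3) sin²(π(N_k−1)/(2N_k))), and every eigenvalue λ of s̄_N satisfies (2/3)ⁿ < λ < 1; equivalently, (2/3)ⁿ ‖w‖_h² < (s̄_N w, w)_h < ‖w‖_h² for every nonzero w ∈ H_h. -/

import Mathlib

open Real

/-- Second difference in direction `i` (step `h i`) on mesh functions. -/
noncomputable def dLam {n : ℕ} (h : Fin n → ℝ) (i : Fin n)
    (w : (Fin n → ℕ) → ℝ) : (Fin n → ℕ) → ℝ :=
  fun k => (w (Function.update k i (k i + 1)) - 2 * w k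
    + w (Function.update k i (k i - 1))) / (h i)^2

/-- The one-dimensional compact average s_{iN} = I + (1/12)hᵢ²Λᵢ. -/
noncomputable def dS {n : ℕ} (h : Fin n → ℝ) (i : Fin n)
    (w : (Fin n → ℕ) → ℝ) : (Fin n → ℕ) → ℝ :=
  fun k => w k + (1/12) * (h i)^2 * dLam h i w k

/-- The splitting average s̄_N = ∏ᵢ s_{iN} (composition over all directions;
the factors commute). -/
noncomputable def dSbar {n : ℕ} (h : Fin n → ℝ)
    (w : (Fin n → ℕ) → ℝ) : (Fin n → ℕ) → ℝ :=
  ((List.finRange n).map (fun i => dS h i)).foldr (fun g acc => g ∘ acc) id w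

/-- The operator s̄_{N î} = ∏_{j ≠ i} s_{jN}. -/
noncomputable def dSbarHat {n : ℕ} (h : Fin n → ℝ) (i : Fin n)
    (w : (Fin n → ℕ) → ℝ) : (Fin n → ℕ) → ℝ :=
  (((List.finRange n).filter (fun j => j != i)).map (fun j => dS h j)).foldr
    (fun g acc => g ∘ acc) id w

/-- The operator Ā_N = −Σᵢ aᵢ² s̄_{N î} Λᵢ. -/
noncomputable def dAbar {n : ℕ} (a h : Fin n → ℝ)
    (w : (Fin n → ℕ) → ℝ) : (Fin n → ℕ) → ℝ :=
  fun k => -∑ i, (a i)^2 * dSbarHat h i (dLam h i w) k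

/-- The compact average s_N = I + (1/12)Σᵢ hᵢ²Λᵢ. -/
noncomputable def dSN {n : ℕ} (h : Fin n → ℝ)
    (w : (Fin n → ℕ) → ℝ) : (Fin n → ℕ) → ℝ :=
  fun k => w k + (1/12) * ∑ i, (h i)^2 * dLam h i w k

/-- Interior mesh nodes: 1 ≤ kᵢ ≤ Nᵢ − 1 for all i. -/
def interiorNode {n : ℕ} (N : Fin n → ℕ) (k : Fin n → ℕ) : Prop :=
  ∀ i, 1 ≤ k i ∧ k i ≤ N i - 1

/-- The finite set of interior mesh nodes. -/
def interiorFinset {n : ℕ} (N : Fin n → ℕ) : Finset (Fin n → ℕ) :=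
  Fintype.piFinset (fun i => Finset.Icc 1 (N i - 1))

/-- The inner product (v,w)_h = h₁⋯h_n Σ_{interior} v w on mesh functions. -/
noncomputable def dInner {n : ℕ} (N : Fin n → ℕ) (h : Fin n → ℝ)
    (v w : (Fin n → ℕ) → ℝ) : ℝ :=
  (∏ i, h i) * ∑ k ∈ interiorFinset N, v k * w k


lemma sum_cos_telescope (x : ℝ) (M : ℕ) :
    2 * Real.sin (x/2) * ∑ t ∈ Finset.range M, Real.cos (t*x)
      = Real.sin ((M - 1/2)*x) + Real.sin (x/2) := by
  induction M with
  | zero =>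
    rw [show (((0:ℕ):ℝ) - 1/2)*x = -(x/2) by push_cast; ring, Real.sin_neg]; simp
  | succ M ih =>
    rw [Finset.sum_range_succ, mul_add, ih]
    have h2 : Real.sin (((M:ℝ)+1 - 1/2)*x) - Real.sin (((M:ℝ) - 1/2)*x)
        = 2 * Real.sin (x/2) * Real.cos ((M:ℝ)*x) := by
      rw [Real.sin_sub_sin]; ring_nf
    push_cast
    nlinarith [h2]

lemma sum_cos_pi (Nn j : ℕ) (hN : 2 ≤ Nn) (hj1 : 1 ≤ j) (hj2 : j ≤ 2*Nn - 2) :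
    ∑ t ∈ Finset.Icc 1 (Nn-1), Real.cos (π*j*t/Nn) = -(1+(-1:ℝ)^j)/2 := by
  set x : ℝ := j*π/Nn with hx
  have hNpos : (0:ℝ) < Nn := by positivity
  have hjpos : (0:ℝ) < j := by exact_mod_cast hj1
  have hj2' : (j:ℝ) ≤ 2*(Nn:ℝ) - 2 := by
    have : (j:ℝ) ≤ ((2*Nn - 2 : ℕ):ℝ) := Nat.cast_le.2 hj2
    rwa [Nat.cast_sub (by omega), Nat.cast_mul, Nat.cast_ofNat] at this
  have hx2pos : 0 < x/2 := by rw [hx]; positivity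
  have hx2lt : x/2 < π := by
    rw [hx, div_div, div_lt_iff₀ (by positivity)]
    nlinarith [Real.pi_pos]
  have hsin : Real.sin (x/2) > 0 := Real.sin_pos_of_pos_of_lt_pi hx2pos hx2lt
  have key := sum_cos_telescope x Nn
  have hNx : ((Nn:ℝ) - 1/2)*x = j*π - x/2 := by
    rw [hx]; field_simp
  rw [hNx, Real.sin_nat_mul_pi_sub] at key
  have hins : Finset.Icc 0 (Nn-1) = insert 0 (Finset.Icc 1 (Nn-1)) := by
    ext t; simp; omega
  have hrange : ∑ t ∈ Finset.range Nn, Real.cos (t*x)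
      = 1 + ∑ t ∈ Finset.Icc 1 (Nn-1), Real.cos (t*x) := by
    rw [show Finset.range Nn = Finset.Icc 0 (Nn-1) by rw [Finset.range_eq_Ico]; ext t; simp; omega,
      hins, Finset.sum_insert (by simp)]
    norm_num
  rw [hrange] at key
  have hform : ∀ t : ℕ, Real.cos (π*j*t/Nn) = Real.cos (t*x) := by
    intro t; rw [hx]; ring_nf
  rw [Finset.sum_congr rfl (fun t _ => hform t)]
  have hne : Real.sin (x/2) ≠ 0 := ne_of_gt hsin
  field_simp at key ⊢
  nlinarith [key]

lemma sin_orth (Nn a b : ℕ) (hN : 2 ≤ Nn) (ha1 : 1 ≤ a) (ha2 : a ≤ Nn - 1)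
    (hb1 : 1 ≤ b) (hb2 : b ≤ Nn - 1) :
    ∑ t ∈ Finset.Icc 1 (Nn-1), Real.sin (π*a*t/Nn) * Real.sin (π*b*t/Nn)
      = if a = b then (Nn:ℝ)/2 else 0 := by
  have hpts : ∀ t : ℕ, Real.sin (π*a*t/Nn) * Real.sin (π*b*t/Nn)
      = (Real.cos (((a:ℝ)-(b:ℝ))*(π*t/Nn)) - Real.cos (π*((a+b:ℕ):ℝ)*t/Nn))/2 := by
    intro t
    have hcc := Real.cos_sub_cos (((a:ℝ)-(b:ℝ))*(π*t/Nn)) (π*((a+b:ℕ):ℝ)*t/Nn)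
    rw [hcc]
    push_cast
    rw [show ((((a:ℝ)-b)*(π*t/Nn)) + π*((a:ℝ)+b)*t/Nn)/2 = π*a*t/Nn by field_simp; ring,
       show ((((a:ℝ)-b)*(π*t/Nn)) - π*((a:ℝ)+b)*t/Nn)/2 = -(π*b*t/Nn) by field_simp; ring,
       Real.sin_neg]
    ring
  rw [Finset.sum_congr rfl (fun t _ => hpts t), ← Finset.sum_div, Finset.sum_sub_distrib]
  have hsum2 : ∑ t ∈ Finset.Icc 1 (Nn-1), Real.cos (π*((a+b:ℕ):ℝ)*t/Nn) = -(1+(-1:ℝ)^(a+b))/2 :=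
    sum_cos_pi Nn (a+b) hN (by omega) (by omega)
  by_cases hab : a = b
  · subst hab
    have h1 : ∀ t:ℕ, Real.cos (((a:ℝ)-(a:ℝ))*(π*t/Nn)) = 1 := by intro t; simp
    rw [Finset.sum_congr rfl (fun t _ => h1 t), Finset.sum_const, hsum2]
    rw [Nat.card_Icc]
    simp only [if_pos rfl]
    have hc : ((Nn - 1 + 1 - 1 : ℕ):ℝ) = (Nn:ℝ) - 1 := by
      have : Nn - 1 + 1 - 1 = Nn - 1 := by omega
      rw [this, Nat.cast_sub (by omega : 1 ≤ Nn)]; norm_num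
    rw [nsmul_eq_mul, hc]
    rw [Even.neg_one_pow (⟨a, rfl⟩ : Even (a+a))]
    ring_nf
    norm_num
  · have hkey : ∑ t ∈ Finset.Icc 1 (Nn-1), Real.cos (((a:ℝ)-(b:ℝ))*(π*t/Nn))
        = -(1+(-1:ℝ)^(a+b))/2 := by
      rcases Nat.lt_or_ge a b with hlt | hge
      · have hc : ∀ t:ℕ, Real.cos (((a:ℝ)-(b:ℝ))*(π*t/Nn)) = Real.cos (π*((b-a:ℕ):ℝ)*t/Nn) := by
          intro t
          rw [← Real.cos_neg (((a:ℝ)-(b:ℝ))*(π*t/Nn))]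
          congr 1
          rw [Nat.cast_sub (le_of_lt hlt)]
          field_simp; ring
        rw [Finset.sum_congr rfl (fun t _ => hc t), sum_cos_pi Nn (b-a) hN (by omega) (by omega)]
        congr 2
        have hp : (-1:ℝ)^(b-a) * (-1:ℝ)^(a+a) = (-1:ℝ)^(a+b) := by
          rw [← pow_add]; congr 1; omega
        rw [Even.neg_one_pow (⟨a, rfl⟩ : Even (a+a)), mul_one] at hp
        rw [hp]
      · have hc : ∀ t:ℕ, Real.cos (((a:ℝ)-(b:ℝ))*(π*t/Nn)) = Real.cos (π*((a-b:ℕ):ℝ)*t/Nn) := by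
          intro t
          congr 1
          rw [Nat.cast_sub hge]
          field_simp
        rw [Finset.sum_congr rfl (fun t _ => hc t), sum_cos_pi Nn (a-b) hN (by omega) (by omega)]
        congr 2
        have hp : (-1:ℝ)^(a-b) * (-1:ℝ)^(b+b) = (-1:ℝ)^(a+b) := by
          rw [← pow_add]; congr 1; omega
        rw [Even.neg_one_pow (⟨b, rfl⟩ : Even (b+b)), mul_one] at hp
        rw [hp]
    rw [hkey, hsum2, if_neg hab]
    ring

noncomputable def s1 (g : ℕ → ℝ) : ℕ → ℝ :=
  fun t => g t + (1/12) * (g (t+1) - 2 * g t + g (t-1))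

noncomputable def gsin (Nn m : ℕ) : ℕ → ℝ :=
  fun t => if t ≤ Nn then Real.sin (π*m*t/Nn) else 0

noncomputable def mu (Nn m : ℕ) : ℝ := 1 - (1/3) * Real.sin (π*m/(2*Nn))^2

noncomputable def Pfun {n : ℕ} (g : Fin n → ℕ → ℝ) : (Fin n → ℕ) → ℝ :=
  fun k => ∏ i, g i (k i)

lemma Pfun_update {n : ℕ} (g : Fin n → ℕ → ℝ) (k : Fin n → ℕ) (i : Fin n) (m : ℕ) :
    Pfun g (Function.update k i m) = g i m * ∏ j ∈ Finset.univ.erase i, g j (k j) := by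
  unfold Pfun
  rw [← Finset.mul_prod_erase Finset.univ _ (Finset.mem_univ i)]
  rw [Function.update_self]
  congr 1
  refine Finset.prod_congr rfl (fun j hj => ?_)
  rw [Function.update_of_ne (Finset.ne_of_mem_erase hj)]

lemma Pfun_split {n : ℕ} (g : Fin n → ℕ → ℝ) (k : Fin n → ℕ) (i : Fin n) :
    Pfun g k = g i (k i) * ∏ j ∈ Finset.univ.erase i, g j (k j) :=
  (Finset.mul_prod_erase Finset.univ _ (Finset.mem_univ i)).symm

lemma dS_Pfun {n : ℕ} (h : Fin n → ℝ) (i : Fin n) (g : Fin n → ℕ → ℝ)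
    (hhi : h i ≠ 0) :
    dS h i (Pfun g) = Pfun (Function.update g i (s1 (g i))) := by
  funext k
  have hup : Pfun (Function.update g i (s1 (g i))) k
      = s1 (g i) (k i) * ∏ j ∈ Finset.univ.erase i, g j (k j) := by
    rw [Pfun_split (Function.update g i (s1 (g i))) k i, Function.update_self]
    congr 1
    exact Finset.prod_congr rfl (fun j hj => by
      rw [Function.update_of_ne (Finset.ne_of_mem_erase hj)])
  rw [hup]
  unfold dS dLam
  rw [Pfun_update, Pfun_update, Pfun_split g k i]
  have h2 : (h i)^2 ≠ 0 := pow_ne_zero 2 hhi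
  unfold s1
  field_simp

lemma foldr_Pfun {n : ℕ} (h : Fin n → ℝ) (hh : ∀ i, h i ≠ 0) (g : Fin n → ℕ → ℝ) :
    ∀ L : List (Fin n), L.Nodup →
    ((L.map (fun i => dS h i)).foldr (fun g acc => g ∘ acc) id) (Pfun g)
      = Pfun (fun j => if j ∈ L then s1 (g j) else g j) := by
  intro L
  induction L generalizing g with
  | nil => intro _; simp [Pfun]
  | cons i L ih =>
    intro hnd
    rcases List.nodup_cons.1 hnd with ⟨hiL, hndL⟩
    simp only [List.map_cons, List.foldr_cons, Function.comp_apply]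
    rw [ih g hndL, dS_Pfun h i _ (hh i)]
    have hfun : Function.update (fun j => if j ∈ L then s1 (g j) else g j) i
        (s1 ((fun j => if j ∈ L then s1 (g j) else g j) i))
        = fun j => if j ∈ i :: L then s1 (g j) else g j := by
      funext j
      by_cases hji : j = i
      · subst hji
        simp [Function.update_apply, hiL]
      · simp only [Function.update_apply, if_neg hji, List.mem_cons]
        by_cases hjL : j ∈ L
        · rw [if_pos hjL, if_pos (Or.inr hjL)]
        · rw [if_neg hjL, if_neg (by tauto)]
    rw [hfun]

lemma dSbar_Pfun {n : ℕ} (h : Fin n → ℝ) (hh : ∀ i, h i ≠ 0) (g : Fin n → ℕ → ℝ) :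
    dSbar h (Pfun g) = Pfun (fun j => s1 (g j)) := by
  unfold dSbar
  rw [show (((List.finRange n).map (fun i => dS h i)).foldr (fun g acc => g ∘ acc) id) (Pfun g)
      = Pfun (fun j => if j ∈ List.finRange n then s1 (g j) else g j) from
    foldr_Pfun h hh g _ (List.nodup_finRange n)]
  have : (fun j => if j ∈ List.finRange n then s1 (g j) else g j) = fun j => s1 (g j) := by
    funext j; rw [if_pos (List.mem_finRange j)]
  rw [this]

lemma s1_gsin (Nn m t : ℕ) (hN : 2 ≤ Nn) (hm1 : 1 ≤ m) (hm : m ≤ Nn - 1)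
    (ht1 : 1 ≤ t) (ht2 : t ≤ Nn - 1) :
    s1 (gsin Nn m) t = mu Nn m * gsin Nn m t := by
  have h1 : t ≤ Nn := by omega
  have h2 : t + 1 ≤ Nn := by omega
  have h3 : t - 1 ≤ Nn := by omega
  unfold s1 gsin mu
  rw [if_pos h1, if_pos h2, if_pos h3]
  have hNne : (Nn:ℝ) ≠ 0 := by positivity
  have hc1 : ((t+1:ℕ):ℝ) = (t:ℝ) + 1 := by push_cast; ring
  have hc2 : ((t-1:ℕ):ℝ) = (t:ℝ) - 1 := by
    rw [Nat.cast_sub ht1]; norm_num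
  rw [hc1, hc2]
  set θ : ℝ := π*m/Nn with hθ
  have e1 : π*m*((t:ℝ)+1)/Nn = θ*t + θ := by rw [hθ]; field_simp; try ring
  have e2 : π*m*((t:ℝ)-1)/Nn = θ*t - θ := by rw [hθ]; field_simp; try ring
  have e3 : π*m*(t:ℝ)/Nn = θ*t := by rw [hθ]; field_simp; try ring
  rw [e1, e2, e3, Real.sin_add, Real.sin_sub]
  have hcosθ : Real.cos θ = 1 - 2 * Real.sin (π*m/(2*Nn))^2 := by
    have : θ = 2 * (π*m/(2*Nn)) := by rw [hθ]; field_simp; try ring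
    rw [this, Real.cos_two_mul']
    linarith [Real.sin_sq_add_cos_sq (π*m/(2*Nn))]
  rw [hcosθ]; ring

lemma gsin_zero_left (Nn m : ℕ) : gsin Nn m 0 = 0 := by
  unfold gsin; simp

lemma gsin_zero_right (Nn m t : ℕ) (hN : 1 ≤ Nn) (ht : Nn ≤ t) : gsin Nn m t = 0 := by
  unfold gsin
  rcases eq_or_lt_of_le ht with rfl | hlt
  · rw [if_pos le_rfl]
    have hNne : (Nn:ℝ) ≠ 0 := by positivity
    rw [show π*(m:ℝ)*Nn/Nn = m*π by field_simp, Real.sin_nat_mul_pi]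
  · rw [if_neg (by omega)]

lemma gsin_pos (Nn m t : ℕ) (hN : 2 ≤ Nn) (hm1 : 1 ≤ m) (hm2 : m ≤ Nn - 1)
    (ht1 : 1 ≤ t) (ht2 : t ≤ Nn - 1) (hmt : m * t ≤ Nn - 1) : 0 < gsin Nn m t := by
  unfold gsin
  rw [if_pos (by omega)]
  apply Real.sin_pos_of_pos_of_lt_pi
  · positivity
  · have hNpos : (0:ℝ) < Nn := by positivity
    rw [div_lt_iff₀ hNpos]
    have : (m:ℝ)*t ≤ (Nn:ℝ) - 1 := by
      have := Nat.cast_le (α := ℝ).2 hmt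
      rwa [Nat.cast_mul, Nat.cast_sub (by omega), Nat.cast_one] at this
    nlinarith [Real.pi_pos]

lemma mu_lt_one (Nn m : ℕ) (hN : 2 ≤ Nn) (hm1 : 1 ≤ m) (hm2 : m ≤ Nn - 1) :
    mu Nn m < 1 := by
  unfold mu
  have hNpos : (0:ℝ) < Nn := by positivity
  have hpos : 0 < Real.sin (π*m/(2*Nn)) := by
    apply Real.sin_pos_of_pos_of_lt_pi
    · positivity
    · rw [div_lt_iff₀ (by positivity)]
      have : (m:ℝ) < 2*Nn := by
        have : m < 2*Nn := by omega
        exact_mod_cast this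
      nlinarith [Real.pi_pos]
  nlinarith

lemma two_thirds_lt_mu (Nn m : ℕ) (hN : 2 ≤ Nn) (hm1 : 1 ≤ m) (hm2 : m ≤ Nn - 1) :
    (2/3:ℝ) < mu Nn m := by
  unfold mu
  have hNpos : (0:ℝ) < Nn := by positivity
  have hcos : 0 < Real.cos (π*m/(2*Nn)) := by
    apply Real.cos_pos_of_mem_Ioo
    constructor
    · have : (0:ℝ) < π*m/(2*Nn) := by positivity
      linarith [Real.pi_pos]
    · rw [div_lt_iff₀ (by positivity)]
      have hmN : (m:ℝ) < (Nn:ℝ) := by exact_mod_cast (by omega : m < Nn)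
      nlinarith [Real.pi_pos]
  nlinarith [Real.sin_sq_add_cos_sq (π*m/(2*Nn))]

lemma mu_pos (Nn m : ℕ) (hN : 2 ≤ Nn) (hm1 : 1 ≤ m) (hm2 : m ≤ Nn - 1) :
    0 < mu Nn m := lt_trans (by norm_num) (two_thirds_lt_mu Nn m hN hm1 hm2)

lemma mu_anti (Nn m m' : ℕ) (hN : 2 ≤ Nn) (hm1 : 1 ≤ m) (hmm : m ≤ m') (hm2 : m' ≤ Nn - 1) :
    mu Nn m' ≤ mu Nn m := by
  unfold mu
  have hNpos : (0:ℝ) < Nn := by positivity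
  have hmono : Real.sin (π*m/(2*Nn)) ≤ Real.sin (π*m'/(2*Nn)) := by
    have hmem : ∀ l : ℕ, l ≤ Nn - 1 → π*l/(2*Nn) ∈ Set.Icc (-(π/2)) (π/2) := by
      intro l hl
      constructor
      · have : (0:ℝ) ≤ π*l/(2*Nn) := by positivity
        linarith [Real.pi_pos]
      · rw [div_le_iff₀ (by positivity)]
        have : (l:ℝ) ≤ (Nn:ℝ) := by exact_mod_cast (by omega : l ≤ Nn)
        nlinarith [Real.pi_pos]
    apply Real.strictMonoOn_sin.monotoneOn (hmem m (by omega)) (hmem m' hm2)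
    have hc : (m:ℝ) ≤ (m':ℝ) := by exact_mod_cast hmm
    gcongr
  have h0 : 0 ≤ Real.sin (π*m/(2*Nn)) := by
    apply Real.sin_nonneg_of_nonneg_of_le_pi
    · positivity
    · have : (m:ℝ) ≤ (Nn:ℝ) := by exact_mod_cast (by omega : m ≤ Nn)
      rw [div_le_iff₀ (by positivity)]
      nlinarith [Real.pi_pos]
  nlinarith

lemma dS_add {n : ℕ} (h : Fin n → ℝ) (i : Fin n) (u v : (Fin n → ℕ) → ℝ) :
    dS h i (fun k => u k + v k) = fun k => dS h i u k + dS h i v k := by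
  funext k; simp only [dS, dLam]; ring

lemma dS_smul {n : ℕ} (h : Fin n → ℝ) (i : Fin n) (c : ℝ) (u : (Fin n → ℕ) → ℝ) :
    dS h i (fun k => c * u k) = fun k => c * dS h i u k := by
  funext k; simp only [dS, dLam]; ring

lemma dS_comb {n : ℕ} (h : Fin n → ℝ) (i : Fin n) {α : Type*} [DecidableEq α] (s : Finset α)
    (c : α → ℝ) (f : α → (Fin n → ℕ) → ℝ) :
    dS h i (fun k => ∑ m ∈ s, c m * f m k) = fun k => ∑ m ∈ s, c m * dS h i (f m) k := by
  induction s using Finset.induction with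
  | empty => funext k; simp [dS, dLam]
  | @insert a s ha ih =>
    simp only [Finset.sum_insert ha]
    rw [dS_add h i (fun k => c a * f a k) (fun k => ∑ m ∈ s, c m * f m k), ih,
      dS_smul h i (c a) (f a)]

lemma foldr_comb {n : ℕ} (h : Fin n → ℝ) {α : Type*} [DecidableEq α] (s : Finset α)
    (c : α → ℝ) (f : α → (Fin n → ℕ) → ℝ) :
    ∀ L : List (Fin n),
    ((L.map (fun i => dS h i)).foldr (fun g acc => g ∘ acc) id) (fun k => ∑ m ∈ s, c m * f m k)
      = fun k => ∑ m ∈ s,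
          c m * ((L.map (fun i => dS h i)).foldr (fun g acc => g ∘ acc) id) (f m) k := by
  intro L
  induction L generalizing f with
  | nil => simp
  | cons i L ih =>
    simp only [List.map_cons, List.foldr_cons, Function.comp_apply]
    rw [ih f]
    rw [dS_comb h i s c _]

lemma dSbar_comb {n : ℕ} (h : Fin n → ℝ) {α : Type*} [DecidableEq α] (s : Finset α)
    (c : α → ℝ) (f : α → (Fin n → ℕ) → ℝ) :
    dSbar h (fun k => ∑ m ∈ s, c m * f m k)
      = fun k => ∑ m ∈ s, c m * dSbar h (f m) k := by
  unfold dSbar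
  exact foldr_comb h s c f (List.finRange n)

lemma mem_interiorFinset {n : ℕ} (N : Fin n → ℕ) (k : Fin n → ℕ) :
    k ∈ interiorFinset N ↔ interiorNode N k := by
  unfold interiorFinset interiorNode
  rw [Fintype.mem_piFinset]
  simp [Finset.mem_Icc]

noncomputable def Efun {n : ℕ} (N : Fin n → ℕ) (m : Fin n → ℕ) : (Fin n → ℕ) → ℝ :=
  Pfun (fun i => gsin (N i) (m i))

lemma Efun_vanish {n : ℕ} (N : Fin n → ℕ) (hN : ∀ i, 2 ≤ N i) (m : Fin n → ℕ)
    (k : Fin n → ℕ) (hk : ¬ interiorNode N k) : Efun N m k = 0 := by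
  unfold interiorNode at hk
  push_neg at hk
  obtain ⟨i, hi⟩ := hk
  unfold Efun Pfun
  apply Finset.prod_eq_zero (Finset.mem_univ i)
  rcases Nat.lt_or_ge (k i) 1 with h0 | h1
  · have : k i = 0 := by omega
    rw [this]; exact gsin_zero_left _ _
  · have : N i ≤ k i := by
      have := hi h1; omega
    exact gsin_zero_right _ _ _ (by have := hN i; omega) this

lemma gsin_swap (Nn u v : ℕ) (hu : u ≤ Nn) (hv : v ≤ Nn) : gsin Nn u v = gsin Nn v u := by
  simp only [gsin]
  rw [if_pos hv, if_pos hu]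
  congr 1
  ring

lemma Efun_interior_eq {n : ℕ} (N : Fin n → ℕ) (hN : ∀ i, 2 ≤ N i) (m : Fin n → ℕ)
    (k : Fin n → ℕ) (hk : interiorNode N k) :
    Efun N m k = ∏ i, Real.sin (π * (m i) * (k i) / N i) := by
  unfold Efun Pfun
  refine Finset.prod_congr rfl (fun i _ => ?_)
  have h1 := hk i
  have h2 := hN i
  simp only [gsin]
  rw [if_pos (by omega)]

lemma Efun_eigen {n : ℕ} (N : Fin n → ℕ) (hN : ∀ i, 2 ≤ N i) (h : Fin n → ℝ)
    (hh : ∀ i, h i ≠ 0) (m : Fin n → ℕ) (hm : ∀ i, 1 ≤ m i ∧ m i ≤ N i - 1)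
    (k : Fin n → ℕ) (hk : interiorNode N k) :
    dSbar h (Efun N m) k = (∏ i, mu (N i) (m i)) * Efun N m k := by
  unfold Efun
  rw [dSbar_Pfun h hh]
  unfold Pfun
  have : ∀ i ∈ Finset.univ, s1 (gsin (N i) (m i)) (k i)
      = mu (N i) (m i) * gsin (N i) (m i) (k i) := by
    intro i _
    exact s1_gsin (N i) (m i) (k i) (hN i) (hm i).1 (hm i).2 (hk i).1 (hk i).2
  rw [Finset.prod_congr rfl this, Finset.prod_mul_distrib]

lemma Efun_orth {n : ℕ} (N : Fin n → ℕ) (hN : ∀ i, 2 ≤ N i) (m m' : Fin n → ℕ)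
    (hm : ∀ i, 1 ≤ m i ∧ m i ≤ N i - 1) (hm' : ∀ i, 1 ≤ m' i ∧ m' i ≤ N i - 1) :
    ∑ k ∈ interiorFinset N, Efun N m k * Efun N m' k
      = if m = m' then ∏ i, ((N i : ℝ)/2) else 0 := by
  have hterm : ∀ k ∈ interiorFinset N, Efun N m k * Efun N m' k
      = ∏ i, (gsin (N i) (m i) (k i) * gsin (N i) (m' i) (k i)) := by
    intro k _
    unfold Efun Pfun
    rw [Finset.prod_mul_distrib]
  rw [Finset.sum_congr rfl hterm]
  unfold interiorFinset
  rw [← Finset.prod_univ_sum (fun i => Finset.Icc 1 (N i - 1))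
    (fun i t => gsin (N i) (m i) t * gsin (N i) (m' i) t)]
  have hfac : ∀ i, ∑ t ∈ Finset.Icc 1 (N i - 1), gsin (N i) (m i) t * gsin (N i) (m' i) t
      = if m i = m' i then ((N i : ℝ)/2) else 0 := by
    intro i
    have hg : ∀ t ∈ Finset.Icc 1 (N i - 1), gsin (N i) (m i) t * gsin (N i) (m' i) t
        = Real.sin (π * (m i) * t / N i) * Real.sin (π * (m' i) * t / N i) := by
      intro t ht
      rw [Finset.mem_Icc] at ht
      have h2 := hN i
      simp only [gsin]
      rw [if_pos (by omega), if_pos (by omega)]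
    rw [Finset.sum_congr rfl hg]
    exact sin_orth (N i) (m i) (m' i) (hN i) (hm i).1 (hm i).2 (hm' i).1 (hm' i).2
  rw [Finset.prod_congr rfl (fun i _ => hfac i)]
  by_cases hmm : m = m'
  · subst hmm
    rw [if_pos rfl]
    exact Finset.prod_congr rfl (fun i _ => by rw [if_pos rfl])
  · rw [if_neg hmm]
    have : ∃ i, m i ≠ m' i := by
      by_contra hc; push_neg at hc; exact hmm (funext hc)
    obtain ⟨i, hi⟩ := this
    exact Finset.prod_eq_zero (Finset.mem_univ i) (by rw [if_neg hi])

lemma Efun_orth_dual {n : ℕ} (N : Fin n → ℕ) (hN : ∀ i, 2 ≤ N i) (a b : Fin n → ℕ)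
    (ha : ∀ i, 1 ≤ a i ∧ a i ≤ N i - 1) (hb : ∀ i, 1 ≤ b i ∧ b i ≤ N i - 1) :
    ∑ m ∈ interiorFinset N, Efun N m a * Efun N m b
      = if a = b then ∏ i, ((N i : ℝ)/2) else 0 := by
  have hswap : ∀ m ∈ interiorFinset N, Efun N m a * Efun N m b = Efun N a m * Efun N b m := by
    intro m hmI
    rw [mem_interiorFinset] at hmI
    unfold Efun Pfun
    congr 1
    · exact Finset.prod_congr rfl (fun i _ => gsin_swap _ _ _
        (by have := hmI i; have := hN i; omega) (by have := ha i; have := hN i; omega))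
    · exact Finset.prod_congr rfl (fun i _ => gsin_swap _ _ _
        (by have := hmI i; have := hN i; omega) (by have := hb i; have := hN i; omega))
  rw [Finset.sum_congr rfl hswap]
  exact Efun_orth N hN a b ha hb

lemma master {n : ℕ} (hn : 1 ≤ n) (N : Fin n → ℕ) (hN : ∀ i, 2 ≤ N i)
    (h : Fin n → ℝ) (hh : ∀ i, h i ≠ 0)
    (w : (Fin n → ℕ) → ℝ) (hw : ∀ k, ¬ interiorNode N k → w k = 0) (hwne : w ≠ 0) :
    0 < ∑ k ∈ interiorFinset N, w k * w k ∧
    (∏ i, mu (N i) (N i - 1)) * ∑ k ∈ interiorFinset N, w k * w k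
      ≤ ∑ k ∈ interiorFinset N, dSbar h w k * w k ∧
    ∑ k ∈ interiorFinset N, dSbar h w k * w k < ∑ k ∈ interiorFinset N, w k * w k := by
  classical
  set I := interiorFinset N with hI
  set D : ℝ := ∏ i, ((N i : ℝ)/2) with hD
  have hDpos : 0 < D := Finset.prod_pos (fun i _ => by
    have := hN i; positivity)
  set c : (Fin n → ℕ) → ℝ := fun m => ∑ k ∈ I, w k * Efun N m k with hc
  set lam : (Fin n → ℕ) → ℝ := fun m => ∏ i, mu (N i) (m i) with hlam
  have hmemI : ∀ m, m ∈ I ↔ (∀ i, 1 ≤ m i ∧ m i ≤ N i - 1) := by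
    intro m; rw [hI, mem_interiorFinset]; rfl
  -- expansion
  have hexp : ∀ k, D * w k = ∑ m ∈ I, c m * Efun N m k := by
    intro k
    by_cases hk : interiorNode N k
    · have : ∀ m ∈ I, c m * Efun N m k
          = ∑ k' ∈ I, w k' * (Efun N m k' * Efun N m k) := by
        intro m _
        rw [hc]
        rw [Finset.sum_mul]
        exact Finset.sum_congr rfl (fun k' _ => by ring)
      rw [Finset.sum_congr rfl this, Finset.sum_comm]
      have : ∀ k' ∈ I, ∑ m ∈ I, w k' * (Efun N m k' * Efun N m k)
          = w k' * (if k' = k then D else 0) := by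
        intro k' hk'
        rw [← Finset.mul_sum]
        congr 1
        exact Efun_orth_dual N hN k' k ((hmemI k').1 hk') ((hmemI k).1 ((hmemI k).2 hk))
      rw [Finset.sum_congr rfl this]
      simp only [mul_ite, mul_zero]
      rw [Finset.sum_ite_eq' I k (fun k' => w k' * D)]
      rw [if_pos (by rw [hI, mem_interiorFinset]; exact hk)]
      ring
    · rw [hw k hk, mul_zero]
      symm
      apply Finset.sum_eq_zero
      intro m _
      rw [Efun_vanish N hN m k hk, mul_zero]
  -- c not all zero
  have hcne : ∃ m ∈ I, c m ≠ 0 := by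
    by_contra hc0
    push_neg at hc0
    apply hwne
    funext k
    show w k = 0
    by_cases hk : interiorNode N k
    · have he := hexp k
      rw [Finset.sum_eq_zero (fun m hm => by rw [hc0 m hm, zero_mul])] at he
      exact (mul_eq_zero.1 he).resolve_left (ne_of_gt hDpos)
    · exact hw k hk
  have hS1 : D * ∑ k ∈ I, w k * w k = ∑ m ∈ I, c m * c m := by
    calc D * ∑ k ∈ I, w k * w k = ∑ k ∈ I, (D * w k) * w k := by
          rw [Finset.mul_sum]; exact Finset.sum_congr rfl (fun k _ => by ring)
    _ = ∑ k ∈ I, (∑ m ∈ I, c m * Efun N m k) * w k := by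
          exact Finset.sum_congr rfl (fun k _ => by rw [hexp k])
    _ = ∑ k ∈ I, ∑ m ∈ I, c m * (w k * Efun N m k) := by
          refine Finset.sum_congr rfl (fun k _ => ?_)
          rw [Finset.sum_mul]
          exact Finset.sum_congr rfl (fun m _ => by ring)
    _ = ∑ m ∈ I, ∑ k ∈ I, c m * (w k * Efun N m k) := Finset.sum_comm
    _ = ∑ m ∈ I, c m * c m := by
          refine Finset.sum_congr rfl (fun m _ => ?_)
          rw [← Finset.mul_sum]
  have hwfun : w = fun k => ∑ m ∈ I, (c m / D) * Efun N m k := by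
    funext k
    have he := hexp k
    have h2 : ∑ m ∈ I, (c m / D) * Efun N m k = (∑ m ∈ I, c m * Efun N m k)/D := by
      rw [Finset.sum_div]; exact Finset.sum_congr rfl (fun m _ => by ring)
    rw [h2, ← he, mul_div_cancel_left₀ _ (ne_of_gt hDpos)]
  have hsb : dSbar h w = fun k => ∑ m ∈ I, (c m / D) * dSbar h (Efun N m) k := by
    calc dSbar h w = dSbar h (fun k => ∑ m ∈ I, (c m / D) * Efun N m k) := by rw [← hwfun]
    _ = _ := dSbar_comb h I (fun m => c m / D) (fun m => Efun N m)
  have hterm : ∀ k ∈ I, dSbar h w k = ∑ m ∈ I, (c m / D) * (lam m * Efun N m k) := by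
    intro k hkI
    have hkN : interiorNode N k := (mem_interiorFinset N k).1 hkI
    rw [hsb]
    exact Finset.sum_congr rfl (fun m hm => by
      rw [Efun_eigen N hN h hh m ((hmemI m).1 hm) k hkN])
  have hS2' : ∑ k ∈ I, dSbar h w k * w k = ∑ m ∈ I, (c m / D) * (lam m * c m) := by
    calc ∑ k ∈ I, dSbar h w k * w k
        = ∑ k ∈ I, ∑ m ∈ I, (c m / D) * lam m * (w k * Efun N m k) := by
          refine Finset.sum_congr rfl (fun k hkI => ?_)
          rw [hterm k hkI, Finset.sum_mul]
          exact Finset.sum_congr rfl (fun m _ => by ring)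
      _ = ∑ m ∈ I, ∑ k ∈ I, (c m / D) * lam m * (w k * Efun N m k) := Finset.sum_comm
      _ = ∑ m ∈ I, (c m / D) * (lam m * c m) := by
          refine Finset.sum_congr rfl (fun m _ => ?_)
          rw [← Finset.mul_sum]
          have hcm : ∑ k ∈ I, w k * Efun N m k = c m := rfl
          rw [hcm]; ring
  have hS2 : D * ∑ k ∈ I, dSbar h w k * w k = ∑ m ∈ I, lam m * (c m * c m) := by
    rw [hS2', Finset.mul_sum]
    refine Finset.sum_congr rfl (fun m _ => ?_)
    field_simp
  have hlam_bounds : ∀ m ∈ I, (∏ i, mu (N i) (N i - 1)) ≤ lam m ∧ lam m < 1 := by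
    intro m hm
    have hmI := (hmemI m).1 hm
    have hmu_pos : ∀ i, 0 < mu (N i) (m i) := fun i =>
      mu_pos (N i) (m i) (hN i) (hmI i).1 (hmI i).2
    have hmu_lt : ∀ i, mu (N i) (m i) < 1 := fun i =>
      mu_lt_one (N i) (m i) (hN i) (hmI i).1 (hmI i).2
    constructor
    · apply Finset.prod_le_prod
      · intro i _
        exact le_of_lt (mu_pos (N i) (N i - 1) (hN i) (by have := hN i; omega) le_rfl)
      · intro i _
        exact mu_anti (N i) (m i) (N i - 1) (hN i) (hmI i).1 (hmI i).2 le_rfl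
    · have i0 : Fin n := ⟨0, hn⟩
      calc lam m = mu (N i0) (m i0) * ∏ i ∈ Finset.univ.erase i0, mu (N i) (m i) :=
            (Finset.mul_prod_erase _ _ (Finset.mem_univ i0)).symm
      _ ≤ mu (N i0) (m i0) * 1 := by
            apply mul_le_mul_of_nonneg_left ?_ (le_of_lt (hmu_pos i0))
            apply Finset.prod_le_one
            · intro i _; exact le_of_lt (hmu_pos i)
            · intro i _; exact le_of_lt (hmu_lt i)
      _ < 1 := by rw [mul_one]; exact hmu_lt i0
  have hsumc : 0 < ∑ m ∈ I, c m * c m := by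
    obtain ⟨m0, hm0I, hm0⟩ := hcne
    exact Finset.sum_pos' (fun m _ => mul_self_nonneg (c m))
      ⟨m0, hm0I, mul_self_pos.2 hm0⟩
  have hQpos : 0 < ∑ k ∈ I, w k * w k := by
    nlinarith [hS1, hDpos, hsumc]
  refine ⟨hQpos, ?_, ?_⟩
  · have h1 : ∑ m ∈ I, (∏ i, mu (N i) (N i - 1)) * (c m * c m)
        ≤ ∑ m ∈ I, lam m * (c m * c m) :=
      Finset.sum_le_sum (fun m hm =>
        mul_le_mul_of_nonneg_right (hlam_bounds m hm).1 (mul_self_nonneg _))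
    rw [← Finset.mul_sum] at h1
    have h2 : D * ((∏ i, mu (N i) (N i - 1)) * ∑ k ∈ I, w k * w k)
        ≤ D * ∑ k ∈ I, dSbar h w k * w k := by
      rw [hS2]
      calc D * ((∏ i, mu (N i) (N i - 1)) * ∑ k ∈ I, w k * w k)
          = (∏ i, mu (N i) (N i - 1)) * (D * ∑ k ∈ I, w k * w k) := by ring
        _ = (∏ i, mu (N i) (N i - 1)) * ∑ m ∈ I, c m * c m := by rw [hS1]
        _ ≤ ∑ m ∈ I, lam m * (c m * c m) := h1
    exact le_of_mul_le_mul_left h2 hDpos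
  · have h1 : ∑ m ∈ I, lam m * (c m * c m) < ∑ m ∈ I, c m * c m := by
      apply Finset.sum_lt_sum
      · intro m hm
        nlinarith [(hlam_bounds m hm).2, mul_self_nonneg (c m)]
      · obtain ⟨m0, hm0I, hm0⟩ := hcne
        refine ⟨m0, hm0I, ?_⟩
        nlinarith [(hlam_bounds m0 hm0I).2, mul_self_pos.2 hm0]
    have h2 : D * ∑ k ∈ I, dSbar h w k * w k < D * ∑ k ∈ I, w k * w k := by
      rw [hS2, hS1]
      exact h1
    exact lt_of_mul_lt_mul_left h2 (le_of_lt hDpos)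

/-- the smallest eigenvalue of s̄_N on H_h equals
∏_{k=1}^n (1 − (1/3)sin²(π(N_k−1)/(2N_k))), every eigenvalue λ of s̄_N satisfies
(2/3)ⁿ < λ < 1, and equivalently (2/3)ⁿ‖w‖_h² < (s̄_N w, w)_h < ‖w‖_h² for every
nonzero w ∈ H_h.  Membership in H_h is expressed by vanishing off the interior nodes,
and eigenpairs are taken in the sense of the operator induced on H_h. -/
theorem stmt_12 (n : ℕ) (hn : 1 ≤ n) (X : Fin n → ℝ) (N : Fin n → ℕ)
    (hX : ∀ i, 0 < X i) (hN : ∀ i, 2 ≤ N i)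
    (h : Fin n → ℝ) (hh : ∀ i, h i = X i / N i)
    (lam₀ : ℝ)
    (hlam₀ : lam₀ = ∏ i, (1 - (1/3) * Real.sin (π * ((N i : ℝ) - 1) / (2 * N i))^2)) :
    (∃ w : (Fin n → ℕ) → ℝ, (∀ k, ¬ interiorNode N k → w k = 0) ∧ w ≠ 0 ∧
      ∀ k, interiorNode N k → dSbar h w k = lam₀ * w k) ∧
    (∀ (lam : ℝ) (w : (Fin n → ℕ) → ℝ),
      (∀ k, ¬ interiorNode N k → w k = 0) → w ≠ 0 →
      (∀ k, interiorNode N k → dSbar h w k = lam * w k) →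
      lam₀ ≤ lam ∧ (2/3 : ℝ)^n < lam ∧ lam < 1) ∧
    (∀ w : (Fin n → ℕ) → ℝ, (∀ k, ¬ interiorNode N k → w k = 0) → w ≠ 0 →
      (2/3 : ℝ)^n * dInner N h w w < dInner N h (dSbar h w) w ∧
      dInner N h (dSbar h w) w < dInner N h w w) := by
  classical
  have hh0 : ∀ i, h i ≠ 0 := by
    intro i
    rw [hh i]
    have h1 := hX i
    have h2 := hN i
    have : (0:ℝ) < N i := by positivity
    positivity
  have hhpos : ∀ i, 0 < h i := by
    intro i
    rw [hh i]
    have h1 := hX i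
    have h2 := hN i
    have : (0:ℝ) < N i := by positivity
    positivity
  have hl : lam₀ = ∏ i, mu (N i) (N i - 1) := by
    rw [hlam₀]
    refine Finset.prod_congr rfl (fun i _ => ?_)
    unfold mu
    rw [Nat.cast_sub (by have := hN i; omega : 1 ≤ N i), Nat.cast_one]
  have hgt : (2/3:ℝ)^n < lam₀ := by
    rw [hl]
    have : (2/3:ℝ)^n = ∏ _i : Fin n, (2/3:ℝ) := by
      rw [Finset.prod_const, Finset.card_univ, Fintype.card_fin]
    rw [this]
    have : Nonempty (Fin n) := ⟨⟨0, hn⟩⟩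
    apply Finset.prod_lt_prod_of_nonempty
    · intro i _; norm_num
    · intro i _; exact two_thirds_lt_mu (N i) (N i - 1) (hN i) (by have := hN i; omega) le_rfl
    · exact Finset.univ_nonempty
  refine ⟨?_, ?_, ?_⟩
  · -- existence of eigenfunction
    set mstar : Fin n → ℕ := fun i => N i - 1 with hmstar
    have hmI : ∀ i, 1 ≤ mstar i ∧ mstar i ≤ N i - 1 := by
      intro i
      show 1 ≤ N i - 1 ∧ N i - 1 ≤ N i - 1
      have := hN i
      omega
    refine ⟨Efun N mstar, fun k hk => Efun_vanish N hN mstar k hk, ?_, ?_⟩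
    · intro heq
      have hps : 0 < Efun N mstar (fun _ => 1) := by
        unfold Efun Pfun
        apply Finset.prod_pos
        intro i _
        exact gsin_pos (N i) (mstar i) 1 (hN i) (hmI i).1 (hmI i).2 le_rfl
          (by have := hN i; omega) (by have := hN i; simp [hmstar])
      have := congrFun heq (fun _ => 1)
      simp only [Pi.zero_apply] at this
      rw [this] at hps
      exact lt_irrefl 0 hps
    · intro k hk
      rw [Efun_eigen N hN h hh0 mstar hmI k hk, hl]
  · -- eigenvalue bounds
    intro lam w hw hwne heig
    obtain ⟨hQ, hlow, hup⟩ := master hn N hN h hh0 w hw hwne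
    have hE : ∑ k ∈ interiorFinset N, dSbar h w k * w k
        = lam * ∑ k ∈ interiorFinset N, w k * w k := by
      rw [Finset.mul_sum]
      refine Finset.sum_congr rfl (fun k hk => ?_)
      rw [heig k ((mem_interiorFinset N k).1 hk)]
      ring
    rw [hE] at hlow hup
    have hll : lam₀ ≤ lam := by
      rw [hl]
      exact le_of_mul_le_mul_right (by linarith [hlow]) hQ
    refine ⟨hll, lt_of_lt_of_le hgt hll, ?_⟩
    have : lam * ∑ k ∈ interiorFinset N, w k * w k
        < 1 * ∑ k ∈ interiorFinset N, w k * w k := by linarith [hup]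
    exact lt_of_mul_lt_mul_right this (le_of_lt hQ)
  · -- quadratic form bounds
    intro w hw hwne
    obtain ⟨hQ, hlow, hup⟩ := master hn N hN h hh0 w hw hwne
    have hP : 0 < ∏ i, h i := Finset.prod_pos (fun i _ => hhpos i)
    have hc1 : (2/3:ℝ)^n * ∑ k ∈ interiorFinset N, w k * w k
        < ∑ k ∈ interiorFinset N, dSbar h w k * w k := by
      have : (2/3:ℝ)^n * ∑ k ∈ interiorFinset N, w k * w k
          < (∏ i, mu (N i) (N i - 1)) * ∑ k ∈ interiorFinset N, w k * w k := by
        rw [hl] at hgt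
        nlinarith [hgt, hQ]
      linarith [hlow]
    constructor
    · show (2/3:ℝ)^n * ((∏ i, h i) * ∑ k ∈ interiorFinset N, w k * w k)
        < (∏ i, h i) * ∑ k ∈ interiorFinset N, dSbar h w k * w k
      nlinarith [mul_lt_mul_of_pos_left hc1 hP]
    · show (∏ i, h i) * ∑ k ∈ interiorFinset N, dSbar h w k * w k
        < (∏ i, h i) * ∑ k ∈ interiorFinset N, w k * w k
      exact mul_lt_mul_of_pos_left hup hP
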